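/- Let e ≥ 1 and let b : Fin e → B, w : Fin e → W be the incidence maps of a finite connected bipartite graph whose only bipartite graph automorphism is the identity triple. Then distinct pairs in the set F of admissible permutation pairs are never simultaneously conjugate: if (σ₁, τ₁) ≠ (σ₂, τ₂) are in F, then no permutation η of Fin e satisfies η σ₁ η⁻¹ = σ₂ and η τ₁ η⁻¹ = τ₂. Consequently, the number of isomorphism classes of dessins d'enfants admitting this bipartite graph equals the cardinality of F, namely the product over all black vertices v of (|b⁻¹(v)| − 1)! times the product over all white vertices u of (|w⁻¹(u)| − 1)!. -/

import Mathlib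

/-!
A simultaneous conjugator `η` of two admissible pairs carries the orbits of `σ₁` to those of
`σ₂`, both being the fibres of `b`, so `η` permutes the fibres of `b`, and likewise those of `w`.
By surjectivity of `b` and `w` it then induces bijections of `B` and `W`, i.e. `η` is part of a
bipartite graph automorphism, hence `η = 1` and the two pairs coincide. So conjugacy classes in
`F` are singletons. Counting `F`: a permutation whose orbits are the fibres of `b` is a family of
transitive permutations of the fibres, and a set of `n ≥ 2` elements carries `(n - 1)!` of them,
namely its `n`-cycles (for `n ≤ 1` only the identity, and `(n - 1)! = 1` as well).
-/

/-- `(σ, τ)` is an admissible pair for the bipartite graph with incidence maps `b` and `w`: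
the orbits of `σ` are exactly the fibers of `b` and the orbits of `τ` are exactly the
fibers of `w`. -/
def IsAdmissiblePair {e : ℕ} {B W : Type*} (b : Fin e → B) (w : Fin e → W)
    (σ τ : Equiv.Perm (Fin e)) : Prop :=
  (∀ k k' : Fin e, (∃ n : ℤ, (σ ^ n) k = k') ↔ b k = b k') ∧
  (∀ k k' : Fin e, (∃ n : ℤ, (τ ^ n) k = k') ↔ w k = w k')

open Equiv Function Nat

namespace Equiv.Perm

variable {α ι : Type*}

theorem cycleType_eq_singleton_card_iff [Fintype α] [DecidableEq α]
    (hα : 2 ≤ Fintype.card α) {σ : Perm α} :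
    σ.cycleType = {Fintype.card α} ↔ ∀ x y, σ.SameCycle x y := by
  constructor
  · intro h x y
    have hcycle : σ.IsCycle := by rw [← card_cycleType_eq_one, h, Multiset.card_singleton]
    have hsupp : σ.support = Finset.univ := by
      apply Finset.eq_univ_of_card
      rw [← sum_cycleType, h, Multiset.sum_singleton]
    exact hcycle.sameCycle (mem_support.mp (hsupp ▸ Finset.mem_univ x))
      (mem_support.mp (hsupp ▸ Finset.mem_univ y))
  · intro h
    have : Nontrivial α := Fintype.one_lt_card_iff_nontrivial.mp hα
    have hmoved : ∀ x, σ x ≠ x := fun x =>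
      IsCycleOn.apply_ne ⟨Set.bijOn_univ.mpr σ.bijective, fun x _ y _ => h x y⟩
        Set.nontrivial_univ (Set.mem_univ x)
    have hsupp : σ.support = Finset.univ :=
      Finset.eq_univ_of_forall fun x => mem_support.mpr (hmoved x)
    obtain ⟨x⟩ := this.to_nonempty
    rw [IsCycle.cycleType ⟨x, hmoved x, fun y _ => h x y⟩, hsupp, Finset.card_univ]

theorem card_forall_sameCycle [Finite α] :
    Nat.card {σ : Perm α // ∀ x y, σ.SameCycle x y} = (Nat.card α - 1)! := by
  classical
  cases nonempty_fintype α
  rw [Nat.card_eq_fintype_card (α := α)]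
  rcases lt_or_ge (Fintype.card α) 2 with hα | hα
  · have : Subsingleton α := Fintype.card_le_one_iff_subsingleton.mp (by omega)
    rw [show Fintype.card α - 1 = 0 by omega, Nat.factorial_zero, Nat.card_eq_one_iff_unique]
    exact ⟨inferInstance, ⟨⟨1, fun x y => Subsingleton.elim x y ▸ SameCycle.refl _ _⟩⟩⟩
  · simp_rw [← cycleType_eq_singleton_card_iff hα]
    rw [Nat.card_eq_fintype_card, Fintype.card_subtype,
      card_of_cycleType_singleton hα le_rfl, Nat.choose_self, mul_one]

def CyclesAreFibers (σ : Perm α) (f : α → ι) : Prop :=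
  ∀ x y, σ.SameCycle x y ↔ f x = f y

theorem comp_zpow_eq_of_comp_eq {σ : Perm α} {f : α → ι} (hσ : f ∘ σ = f) (n : ℤ) :
    f ∘ ⇑(σ ^ n) = f := by
  have hσinv : f ∘ ⇑σ⁻¹ = f := by rw [← hσ, comp_assoc, coe_inv, self_comp_symm, comp_id, hσ]
  induction n using Int.induction_on with
  | zero => rfl
  | succ n ih => rw [zpow_add_one, coe_mul, ← comp_assoc, ih, hσ]
  | pred n ih => rw [zpow_sub_one, coe_mul, ← comp_assoc, ih, hσinv]

theorem SameCycle.apply_eq_of_comp_eq {σ : Perm α} {f : α → ι} (hσ : f ∘ σ = f) {x y : α}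
    (h : σ.SameCycle x y) : f x = f y := by
  obtain ⟨n, rfl⟩ := h
  exact (congrFun (comp_zpow_eq_of_comp_eq hσ n) x).symm

theorem CyclesAreFibers.comp_eq {σ : Perm α} {f : α → ι} (h : σ.CyclesAreFibers f) :
    f ∘ σ = f :=
  funext fun x => ((h x (σ x)).mp (SameCycle.refl σ x |>.apply_right)).symm

theorem cyclesAreFibers_iff_forall_sameCycle {σ : Perm α} {f : α → ι} (hσ : f ∘ σ = f) :
    σ.CyclesAreFibers f ↔ ∀ x y, f x = f y → σ.SameCycle x y :=
  ⟨fun h x y => (h x y).mpr, fun h x y => ⟨SameCycle.apply_eq_of_comp_eq hσ, h x y⟩⟩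

def fiberwiseEquiv (f : α → ι) : {σ : Perm α // f ∘ σ = f} ≃ ∀ i, Perm {a // f a = i} :=
  ((subtypeEquiv DomMulAct.mk fun _ => DomMulAct.mem_stabilizer_iff.symm).trans
    MulOpposite.opEquiv).trans (DomMulAct.stabilizerMulEquiv f).toEquiv

theorem fiberwiseEquiv_apply {f : α → ι} (σ : {σ : Perm α // f ∘ σ = f}) (i : ι) :
    fiberwiseEquiv f σ i = σ.1.subtypePerm fun a => by rw [← comp_apply (f := f), σ.2] :=
  rfl

theorem card_cyclesAreFibers [Finite α] [Fintype ι] (f : α → ι) :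
    Nat.card {σ : Perm α // σ.CyclesAreFibers f} = ∏ i, (Nat.card {a // f a = i} - 1)! := by
  let E : {σ : Perm α // σ.CyclesAreFibers f} ≃
      ∀ i, {g : Perm {a // f a = i} // ∀ x y, g.SameCycle x y} :=
    (subtypeSubtypeEquivSubtype CyclesAreFibers.comp_eq).symm.trans <|
      ((fiberwiseEquiv f).subtypeEquiv fun σ => ?_).trans subtypePiEquivPi
  · rw [Nat.card_congr E, Nat.card_pi]
    exact Finset.prod_congr rfl fun i _ => card_forall_sameCycle
  · simp only [cyclesAreFibers_iff_forall_sameCycle σ.2, fiberwiseEquiv_apply,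
      sameCycle_subtypePerm, Subtype.forall]
    exact ⟨fun h i x hx y hy => h x y (hx.trans hy.symm), fun h x y hxy => h (f y) x hxy y rfl⟩

theorem CyclesAreFibers.apply_eq_apply_iff_of_conj {σ η : Perm α} {f : α → ι}
    (h : σ.CyclesAreFibers f) (hconj : (η * σ * η⁻¹).CyclesAreFibers f) (x y : α) :
    f (η x) = f (η y) ↔ f x = f y := by
  rw [← hconj, sameCycle_conj, coe_inv, symm_apply_apply, symm_apply_apply, h]

end Equiv.Perm

theorem Function.Surjective.exists_perm_comp_eq {α β : Type*} {f : α → β} (hf : Surjective f)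
    {η : Perm α} (hη : ∀ x y, f (η x) = f (η y) ↔ f x = f y) :
    ∃ β' : Perm β, f ∘ η = β' ∘ f := by
  let E := Setoid.quotientKerEquivOfSurjective f hf
  refine ⟨E.symm.trans ((Quotient.congr η fun x y => (hη x y).symm).trans E), funext fun x => ?_⟩
  simpa [E, Setoid.quotientKerEquivOfSurjective] using (hη _ _).mpr (surjInv_eq hf (f x)).symm

theorem Nat.card_quot_of_rel_imp_eq {α : Type*} {r : α → α → Prop} (h : ∀ a b, r a b → a = b) :
    Nat.card (Quot r) = Nat.card α :=
  Nat.card_congr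
    { toFun := Quot.lift id h
      invFun := Quot.mk r
      left_inv := Quot.ind fun _ => rfl
      right_inv := fun _ => rfl }

section AdmissiblePair

variable {e : ℕ} {B W : Type*} {b : Fin e → B} {w : Fin e → W}

theorem isAdmissiblePair_iff {σ τ : Perm (Fin e)} :
    IsAdmissiblePair b w σ τ ↔ σ.CyclesAreFibers b ∧ τ.CyclesAreFibers w :=
  Iff.rfl

theorem IsAdmissiblePair.eq_of_conj (hb : Surjective b) (hw : Surjective w)
    (hrigid : ∀ (β : B ≃ B) (ω : W ≃ W) (π : Perm (Fin e)),
      b ∘ π = β ∘ b → w ∘ π = ω ∘ w → π = Equiv.refl (Fin e))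
    {σ₁ τ₁ σ₂ τ₂ η : Perm (Fin e)} (h₁ : IsAdmissiblePair b w σ₁ τ₁)
    (h₂ : IsAdmissiblePair b w σ₂ τ₂) (hσ : η * σ₁ * η⁻¹ = σ₂) (hτ : η * τ₁ * η⁻¹ = τ₂) :
    σ₁ = σ₂ ∧ τ₁ = τ₂ := by
  subst hσ hτ
  obtain ⟨hσ₁, hτ₁⟩ := isAdmissiblePair_iff.mp h₁
  obtain ⟨hσ₂, hτ₂⟩ := isAdmissiblePair_iff.mp h₂
  obtain ⟨β, hβ⟩ := hb.exists_perm_comp_eq (hσ₁.apply_eq_apply_iff_of_conj hσ₂)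
  obtain ⟨ω, hω⟩ := hw.exists_perm_comp_eq (hτ₁.apply_eq_apply_iff_of_conj hτ₂)
  have hη : η = 1 := hrigid β ω η hβ hω
  simp [hη]

theorem card_isAdmissiblePair [Fintype B] [Fintype W] :
    Nat.card {p : Perm (Fin e) × Perm (Fin e) // IsAdmissiblePair b w p.1 p.2} =
      (∏ v : B, (Nat.card {k : Fin e // b k = v} - 1)!) *
      (∏ u : W, (Nat.card {k : Fin e // w k = u} - 1)!) := by
  rw [← Perm.card_cyclesAreFibers, ← Perm.card_cyclesAreFibers, ← Nat.card_prod]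
  exact Nat.card_congr <| subtypeProdEquivProd
    (p := fun σ : Perm (Fin e) => σ.CyclesAreFibers b)
    (q := fun τ : Perm (Fin e) => τ.CyclesAreFibers w)

end AdmissiblePair

theorem stmt2_general {e : ℕ} {B W : Type*} [Fintype B] [Fintype W]
    (b : Fin e → B) (w : Fin e → W) (hb : Function.Surjective b) (hw : Function.Surjective w)
    (htrivial : ∀ (β : B ≃ B) (ω : W ≃ W) (π : Equiv.Perm (Fin e)),
      b ∘ π = β ∘ b → w ∘ π = ω ∘ w →
        β = Equiv.refl B ∧ ω = Equiv.refl W ∧ π = Equiv.refl (Fin e)) :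
    (∀ σ₁ τ₁ σ₂ τ₂ : Equiv.Perm (Fin e), IsAdmissiblePair b w σ₁ τ₁ →
      IsAdmissiblePair b w σ₂ τ₂ → (σ₁, τ₁) ≠ (σ₂, τ₂) →
      ¬ ∃ η : Equiv.Perm (Fin e), η * σ₁ * η⁻¹ = σ₂ ∧ η * τ₁ * η⁻¹ = τ₂) ∧
    Nat.card (Quot (fun p q : {p : Equiv.Perm (Fin e) × Equiv.Perm (Fin e) //
        IsAdmissiblePair b w p.1 p.2} =>
          ∃ η : Equiv.Perm (Fin e), η * p.val.1 * η⁻¹ = q.val.1 ∧ η * p.val.2 * η⁻¹ = q.val.2)) =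
      Nat.card {p : Equiv.Perm (Fin e) × Equiv.Perm (Fin e) // IsAdmissiblePair b w p.1 p.2} ∧
    Nat.card {p : Equiv.Perm (Fin e) × Equiv.Perm (Fin e) // IsAdmissiblePair b w p.1 p.2} =
      (∏ v : B, Nat.factorial (Nat.card {k : Fin e // b k = v} - 1)) *
      (∏ u : W, Nat.factorial (Nat.card {k : Fin e // w k = u} - 1)) := by
  have hrigid := fun β ω π hβ hω => (htrivial β ω π hβ hω).2.2
  refine ⟨?_, Nat.card_quot_of_rel_imp_eq ?_, card_isAdmissiblePair⟩
  · rintro σ₁ τ₁ σ₂ τ₂ h₁ h₂ hne ⟨η, hσ, hτ⟩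
    obtain ⟨rfl, rfl⟩ := h₁.eq_of_conj hb hw hrigid h₂ hσ hτ
    exact hne rfl
  · rintro ⟨⟨σ₁, τ₁⟩, h₁⟩ ⟨⟨σ₂, τ₂⟩, h₂⟩ ⟨η, hσ, hτ⟩
    obtain ⟨rfl, rfl⟩ := h₁.eq_of_conj hb hw hrigid h₂ hσ hτ
    rfl

theorem stmt2 {e : ℕ} (he : 1 ≤ e) {B W : Type*} [Fintype B] [Fintype W]
    (b : Fin e → B) (w : Fin e → W) (hb : Function.Surjective b) (hw : Function.Surjective w)
    (hconn : ∀ k k' : Fin e,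
      Relation.EqvGen (fun k k' => b k = b k' ∨ w k = w k') k k')
    (htrivial : ∀ (β : B ≃ B) (ω : W ≃ W) (π : Equiv.Perm (Fin e)),
      b ∘ π = β ∘ b → w ∘ π = ω ∘ w →
        β = Equiv.refl B ∧ ω = Equiv.refl W ∧ π = Equiv.refl (Fin e)) :
    (∀ σ₁ τ₁ σ₂ τ₂ : Equiv.Perm (Fin e), IsAdmissiblePair b w σ₁ τ₁ →
      IsAdmissiblePair b w σ₂ τ₂ → (σ₁, τ₁) ≠ (σ₂, τ₂) →
      ¬ ∃ η : Equiv.Perm (Fin e), η * σ₁ * η⁻¹ = σ₂ ∧ η * τ₁ * η⁻¹ = τ₂) ∧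
    Nat.card (Quot (fun p q : {p : Equiv.Perm (Fin e) × Equiv.Perm (Fin e) //
        IsAdmissiblePair b w p.1 p.2} =>
          ∃ η : Equiv.Perm (Fin e), η * p.val.1 * η⁻¹ = q.val.1 ∧ η * p.val.2 * η⁻¹ = q.val.2)) =
      Nat.card {p : Equiv.Perm (Fin e) × Equiv.Perm (Fin e) // IsAdmissiblePair b w p.1 p.2} ∧
    Nat.card {p : Equiv.Perm (Fin e) × Equiv.Perm (Fin e) // IsAdmissiblePair b w p.1 p.2} =
      (∏ v : B, Nat.factorial (Nat.card {k : Fin e // b k = v} - 1)) *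
      (∏ u : W, Nat.factorial (Nat.card {k : Fin e // w k = u} - 1)) :=
  stmt2_general b w hb hw htrivial
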